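/- arXiv:2202.11624 — 5 statements merged into one kernel-verified Lean document; each statement's English description precedes it below -/
import Mathlib

section
/- Let α ∈ ℝ satisfy π/(n+1) < α < π/n for some integer n ≥ 2. Define β = (1/2 + m)α - π where m is the minimal nonnegative integer such that this expression is nonnegative. Then β ≠ α/2. -/
/-! `β = α / 2` says exactly `m * α = π`, i.e. `α = π / m`; but strictly between `π / (n + 1)`
and `π / n` there is no submultiple of `π`. -/

open Real

theorem natCast_mul_ne_of_div_succ_lt_of_lt_div {c α : ℝ} (hc : 0 < c) {n : ℕ}
    (hlow : c / (n + 1) < α) (hhigh : α < c / n) (m : ℕ) : (m : ℝ) * α ≠ c := by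
  intro hmα
  have hα : 0 < α := (div_pos hc (by positivity)).trans hlow
  -- `c / 0 = 0`, so `hhigh` with `0 < α` rules out `n = 0`.
  have hn : (0 : ℝ) < n := by
    by_contra! hn
    rw [div_eq_zero_iff.mpr (Or.inr (le_antisymm hn n.cast_nonneg))] at hhigh
    exact hα.not_gt hhigh
  have hnm : (n : ℝ) < m := by
    have := (lt_div_iff₀ hn).mp hhigh
    nlinarith
  have hmn : (m : ℝ) < n + 1 := by
    have := (div_lt_iff₀ (by positivity : (0 : ℝ) < n + 1)).mp hlow
    nlinarith
  norm_cast at hnm hmn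
  omega

theorem stmt_5_general (α : ℝ) (n : ℕ)
    (hlow : Real.pi / (n + 1) < α) (hhigh : α < Real.pi / n)
    (m : ℕ) :
    (1 / 2 + (m : ℝ)) * α - Real.pi ≠ α / 2 :=
  fun h ↦ natCast_mul_ne_of_div_succ_lt_of_lt_div pi_pos hlow hhigh m (by linarith)

theorem stmt_5 (α : ℝ) (n : ℕ) (hn : 2 ≤ n)
    (hlow : Real.pi / (n + 1) < α) (hhigh : α < Real.pi / n)
    (m : ℕ) (hm : 0 ≤ (1 / 2 + (m : ℝ)) * α - Real.pi)
    (hmin : ∀ j : ℕ, j < m → (1 / 2 + (j : ℝ)) * α - Real.pi < 0) :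
    (1 / 2 + (m : ℝ)) * α - Real.pi ≠ α / 2 :=
  stmt_5_general α n hlow hhigh m
end

section
/- Let g : [a,b] → ℝ be a C² function with Lipschitz second derivative such that g(a) = g(b) = R for some R > 0, g(x) < R for all x ∈ (a,b), and g''(x) ≥ δ for all x ∈ (a,b) with δ > 0. Then there exist constants C, C' > 0 depending only on R, δ and the C^{2,1}-norm of g, such that if |g'(a)| is sufficiently small compared to δ, then C'|g'(a)| < b - a < C|g'(a)|. -/
/-!
Rolle's theorem gives a critical point `c ∈ (a, b)` of `g`, so `|g'(a)| = |g'(c) - g'(a)|` lies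
between `δ (c - a)` and `M (c - a)`; the upper estimate bounds `b - a` from below. For the other
direction, the second-order Taylor lower bounds `g(c) - g(a) ≥ g'(a) (c - a) + δ (c - a)² / 2` and
`g(b) - g(c) ≥ δ (b - c)² / 2`, together with `g(a) = g(b)`, give
`(δ (b - c))² ≤ |g'(a)|² - (|g'(a)| - δ (c - a))²`, hence `δ (b - a) ≤ 2 |g'(a)|`.
-/

open Set

section MeanValue

variable {f f' f'' : ℝ → ℝ} {a b m : ℝ}

lemma mul_sub_le_sub_of_le_hasDerivAt (hab : a ≤ b) (hf : ∀ x ∈ Icc a b, HasDerivAt f (f' x) x)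
    (hm : ∀ x ∈ Ioo a b, m ≤ f' x) : m * (b - a) ≤ f b - f a := by
  refine (convex_Icc a b).mul_sub_le_image_sub_of_le_deriv
    (fun x hx => (hf x hx).continuousAt.continuousWithinAt) ?_ ?_ a (left_mem_Icc.2 hab) b
    (right_mem_Icc.2 hab) hab <;> rw [interior_Icc]
  · exact fun x hx => (hf x (Ioo_subset_Icc_self hx)).differentiableAt.differentiableWithinAt
  · exact fun x hx => (hf x (Ioo_subset_Icc_self hx)).deriv ▸ hm x hx

lemma mul_sub_add_mul_sq_le_sub_of_le_hasDerivAt₂ (hab : a ≤ b)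
    (hf : ∀ x ∈ Icc a b, HasDerivAt f (f' x) x) (hf' : ∀ x ∈ Icc a b, HasDerivAt f' (f'' x) x)
    (hm : ∀ x ∈ Ioo a b, m ≤ f'' x) : f' a * (b - a) + m * (b - a) ^ 2 / 2 ≤ f b - f a := by
  have hφ : ∀ x ∈ Icc a b, HasDerivAt (fun y => f y - f' a * (y - a) - m * (y - a) ^ 2 / 2)
      (f' x - f' a - m * (x - a)) x := by
    intro x hx
    refine (((hf x hx).sub (((hasDerivAt_id x).sub_const a).const_mul (f' a))).sub
      ((((hasDerivAt_id x).sub_const a).pow 2).const_mul m |>.div_const 2)).congr_deriv ?_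
    simp only [id, Nat.cast_ofNat]
    ring
  have hφ' : ∀ x ∈ Ioo a b, 0 ≤ f' x - f' a - m * (x - a) := by
    intro x hx
    have := mul_sub_le_sub_of_le_hasDerivAt hx.1.le
      (fun y hy => hf' y ⟨hy.1, hy.2.trans hx.2.le⟩) (fun y hy => hm y ⟨hy.1, hy.2.trans hx.2⟩)
    linarith
  have := mul_sub_le_sub_of_le_hasDerivAt hab hφ hφ'
  simp only [sub_self] at this
  linarith

end MeanValue

section CriticalPoint

variable {g g' g'' : ℝ → ℝ} {a b : ℝ}

lemma abs_div_add_one_lt_sub_of_eq_of_abs_deriv₂_le {M : ℝ} (hab : a < b)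
    (hg : ∀ x ∈ Icc a b, HasDerivAt g (g' x) x) (hg' : ∀ x ∈ Icc a b, HasDerivAt g' (g'' x) x)
    (hgab : g a = g b) (hM : ∀ x ∈ Icc a b, |g'' x| ≤ M) : |g' a| / (M + 1) < b - a := by
  obtain ⟨c, hc, hgc⟩ := exists_hasDerivAt_eq_zero hab
    (fun x hx => (hg x hx).continuousAt.continuousWithinAt) hgab
    (fun x hx => hg x (Ioo_subset_Icc_self hx))
  have hslope : |g' c - g' a| ≤ M * (c - a) :=
    norm_image_sub_le_of_norm_deriv_le_segment'
      (fun x hx => (hg' x ⟨hx.1, hx.2.trans hc.2.le⟩).hasDerivWithinAt)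
      (fun x hx => hM x ⟨hx.1, hx.2.le.trans hc.2.le⟩) c (right_mem_Icc.2 hc.1.le)
  rw [hgc, zero_sub, abs_neg] at hslope
  have hM1 : 0 < M + 1 := by linarith [(abs_nonneg _).trans (hM a (left_mem_Icc.2 hab.le))]
  rw [div_lt_iff₀ hM1]
  nlinarith [hc.1, hc.2]

lemma sub_lt_three_div_mul_abs_of_eq_of_le_deriv₂ {δ : ℝ} (hδ : 0 < δ) (hab : a < b)
    (hg : ∀ x ∈ Icc a b, HasDerivAt g (g' x) x) (hg' : ∀ x ∈ Icc a b, HasDerivAt g' (g'' x) x)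
    (hgab : g a = g b) (hδg : ∀ x ∈ Ioo a b, δ ≤ g'' x) : b - a < 3 / δ * |g' a| := by
  obtain ⟨c, hc, hgc⟩ := exists_hasDerivAt_eq_zero hab
    (fun x hx => (hg x hx).continuousAt.continuousWithinAt) hgab
    (fun x hx => hg x (Ioo_subset_Icc_self hx))
  have hIcc_ac : Icc a c ⊆ Icc a b := Icc_subset_Icc_right hc.2.le
  have hIcc_cb : Icc c b ⊆ Icc a b := Icc_subset_Icc_left hc.1.le
  have hslope : δ * (c - a) ≤ g' c - g' a :=
    mul_sub_le_sub_of_le_hasDerivAt hc.1.le (fun x hx => hg' x (hIcc_ac hx))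
      (fun x hx => hδg x ⟨hx.1, hx.2.trans hc.2⟩)
  have htaylor_a := mul_sub_add_mul_sq_le_sub_of_le_hasDerivAt₂ hc.1.le
    (fun x hx => hg x (hIcc_ac hx)) (fun x hx => hg' x (hIcc_ac hx))
    (fun x hx => hδg x ⟨hx.1, hx.2.trans hc.2⟩)
  have htaylor_c := mul_sub_add_mul_sq_le_sub_of_le_hasDerivAt₂ hc.2.le
    (fun x hx => hg x (hIcc_cb hx)) (fun x hx => hg' x (hIcc_cb hx))
    (fun x hx => hδg x ⟨hc.1.trans hx.1, hx.2⟩)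
  have hga : g' a < 0 := by nlinarith [hc.1]
  have hsq : (δ * (b - c)) ^ 2 ≤ (-g' a) ^ 2 := by
    rw [hgc, zero_mul, zero_add] at htaylor_c
    nlinarith [sq_nonneg (δ * (c - a) + g' a), mul_le_mul_of_nonneg_left
      (show δ * (b - c) ^ 2 / 2 ≤ -g' a * (c - a) - δ * (c - a) ^ 2 / 2 by linarith) hδ.le]
  have hbc : δ * (b - c) ≤ -g' a := le_of_sq_le_sq hsq (by linarith)
  rw [abs_of_neg hga, div_mul_eq_mul_div, lt_div_iff₀ hδ]
  nlinarith

end CriticalPoint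

theorem stmt_6_general (R δ L M : ℝ) (hδ : 0 < δ) (hM : 0 ≤ M) :
    ∃ C C' ε : ℝ, 0 < C ∧ 0 < C' ∧ 0 < ε ∧
      ∀ (a b : ℝ) (g g' g'' : ℝ → ℝ), a < b →
        (∀ x ∈ Set.Icc a b, HasDerivAt g (g' x) x) →
        (∀ x ∈ Set.Icc a b, HasDerivAt g' (g'' x) x) →
        LipschitzOnWith (Real.toNNReal L) g'' (Set.Icc a b) →
        (∀ x ∈ Set.Icc a b, |g x| ≤ M ∧ |g' x| ≤ M ∧ |g'' x| ≤ M) →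
        g a = R → g b = R →
        (∀ x ∈ Set.Ioo a b, g x < R) →
        (∀ x ∈ Set.Ioo a b, δ ≤ g'' x) →
        |g' a| < ε →
        C' * |g' a| < b - a ∧ b - a < C * |g' a| := by
  refine ⟨3 / δ, 1 / (M + 1), 1, by positivity, by positivity, one_pos, ?_⟩
  intro a b g g' g'' hab hg hg' _ hbound hga hgb _ hδg _
  rw [one_div_mul_eq_div]
  exact ⟨abs_div_add_one_lt_sub_of_eq_of_abs_deriv₂_le hab hg hg' (hga.trans hgb.symm)
      (fun x hx => (hbound x hx).2.2),
    sub_lt_three_div_mul_abs_of_eq_of_le_deriv₂ hδ hab hg hg' (hga.trans hgb.symm) hδg⟩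

theorem stmt_6 (R δ L M : ℝ) (hR : 0 < R) (hδ : 0 < δ) (hL : 0 ≤ L) (hM : 0 ≤ M) :
    ∃ C C' ε : ℝ, 0 < C ∧ 0 < C' ∧ 0 < ε ∧
      ∀ (a b : ℝ) (g g' g'' : ℝ → ℝ), a < b →
        (∀ x ∈ Set.Icc a b, HasDerivAt g (g' x) x) →
        (∀ x ∈ Set.Icc a b, HasDerivAt g' (g'' x) x) →
        LipschitzOnWith (Real.toNNReal L) g'' (Set.Icc a b) →
        (∀ x ∈ Set.Icc a b, |g x| ≤ M ∧ |g' x| ≤ M ∧ |g'' x| ≤ M) →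
        g a = R → g b = R →
        (∀ x ∈ Set.Ioo a b, g x < R) →
        (∀ x ∈ Set.Ioo a b, δ ≤ g'' x) →
        |g' a| < ε →
        C' * |g' a| < b - a ∧ b - a < C * |g' a| :=
  stmt_6_general R δ L M hδ hM
end

section
/- Let g : [a,b] → ℝ be a C² function with Lipschitz second derivative such that g(a) = g(b) = R > 0, g(x) < R for x ∈ (a,b), and g''(x) ≥ δ > 0 on (a,b). Then there exists C > 0 depending only on R, δ and the C^{2,1}-norm of g such that |R - g(x)| < C·g'(a)² for all x ∈ [a,b], provided |g'(a)| is sufficiently small compared to δ. -/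
/-! Since `g'' ≥ δ`, the function `g` lies above the parabola
`g a + g' a (x - a) + δ/2 (x - a)²`, whose depth below `g a` is at most `g' a ² / (2δ)`.
Together with `g ≤ R` this gives `R - g x ≤ g' a ² / (2δ)`. The slope `g' a` cannot vanish,
since then the parabola would force `g b > g a`. -/

open Set

theorem sub_le_sub_of_hasDerivAt_le {f f' h h' : ℝ → ℝ} {a b x : ℝ}
    (hf : ∀ y ∈ Icc a b, HasDerivAt f (f' y) y) (hh : ∀ y ∈ Icc a b, HasDerivAt h (h' y) y)
    (hle : ∀ y ∈ Ioo a b, h' y ≤ f' y) (hx : x ∈ Icc a b) :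
    h x - h a ≤ f x - f a := by
  have hderiv : ∀ y ∈ Icc a b, HasDerivAt (f - h) (f' y - h' y) y :=
    fun y hy ↦ (hf y hy).sub (hh y hy)
  have hmono : MonotoneOn (f - h) (Icc a b) := by
    refine monotoneOn_of_hasDerivWithinAt_nonneg (f' := fun y ↦ f' y - h' y) (convex_Icc a b)
      (fun y hy ↦ (hderiv y hy).continuousAt.continuousWithinAt) (fun y hy ↦ ?_) (fun y hy ↦ ?_)
    · rw [interior_Icc] at hy
      exact (hderiv y (Ioo_subset_Icc_self hy)).hasDerivWithinAt
    · rw [interior_Icc] at hy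
      exact sub_nonneg.2 (hle y hy)
  have := hmono (left_mem_Icc.2 (hx.1.trans hx.2)) hx hx.1
  simp only [Pi.sub_apply] at this
  linarith

section SecondDerivativeBound

variable {g g' g'' : ℝ → ℝ} {a b δ x : ℝ}

theorem quadratic_minorant_of_le_second_deriv
    (hg : ∀ y ∈ Icc a b, HasDerivAt g (g' y) y) (hg' : ∀ y ∈ Icc a b, HasDerivAt g' (g'' y) y)
    (hδ : ∀ y ∈ Ioo a b, δ ≤ g'' y) (hx : x ∈ Icc a b) :
    g a + g' a * (x - a) + δ / 2 * (x - a) ^ 2 ≤ g x := by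
  have hderiv_ge : ∀ y ∈ Icc a b, g' a + δ * (y - a) ≤ g' y := fun y hy ↦ by
    have := sub_le_sub_of_hasDerivAt_le hg' (fun z _ ↦ hasDerivAt_mul_const δ) hδ hy
    linarith
  have hparabola : ∀ y ∈ Icc a b, HasDerivAt (fun z ↦ g' a * (z - a) + δ / 2 * (z - a) ^ 2)
      (g' a + δ * (y - a)) y := fun y _ ↦ by
    have hlin : HasDerivAt (fun z : ℝ ↦ z - a) 1 y := (hasDerivAt_id y).sub_const a
    exact ((hlin.const_mul (g' a)).fun_add ((hlin.fun_pow 2).const_mul (δ / 2))).congr_deriv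
      (by push_cast; ring)
  have := sub_le_sub_of_hasDerivAt_le hg hparabola
    (fun y hy ↦ hderiv_ge y (Ioo_subset_Icc_self hy)) hx
  simp only [sub_self, mul_zero, zero_pow two_ne_zero, add_zero, sub_zero] at this
  linarith

theorem sub_le_sq_div_of_le_second_deriv (hδpos : 0 < δ)
    (hg : ∀ y ∈ Icc a b, HasDerivAt g (g' y) y) (hg' : ∀ y ∈ Icc a b, HasDerivAt g' (g'' y) y)
    (hδ : ∀ y ∈ Ioo a b, δ ≤ g'' y) (hx : x ∈ Icc a b) :
    g a - g x ≤ g' a ^ 2 / (2 * δ) := by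
  have hmin := quadratic_minorant_of_le_second_deriv hg hg' hδ hx
  have hsq : 0 ≤ (δ * (x - a) + g' a) ^ 2 / (2 * δ) := by positivity
  have hcomplete : g' a ^ 2 / (2 * δ) - (δ * (x - a) + g' a) ^ 2 / (2 * δ)
      = -(g' a * (x - a) + δ / 2 * (x - a) ^ 2) := by
    field_simp
    ring
  linarith

end SecondDerivativeBound

theorem stmt_7_general (R δ L M : ℝ) (hδ : 0 < δ) :
    ∃ C ε : ℝ, 0 < C ∧ 0 < ε ∧
      ∀ (a b : ℝ) (g g' g'' : ℝ → ℝ), a < b →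
        (∀ x ∈ Set.Icc a b, HasDerivAt g (g' x) x) →
        (∀ x ∈ Set.Icc a b, HasDerivAt g' (g'' x) x) →
        LipschitzOnWith (Real.toNNReal L) g'' (Set.Icc a b) →
        (∀ x ∈ Set.Icc a b, |g x| ≤ M ∧ |g' x| ≤ M ∧ |g'' x| ≤ M) →
        g a = R → g b = R →
        (∀ x ∈ Set.Ioo a b, g x < R) →
        (∀ x ∈ Set.Ioo a b, δ ≤ g'' x) →
        |g' a| < ε →
        ∀ x ∈ Set.Icc a b, |R - g x| < C * (g' a) ^ 2 := by
  refine ⟨1 / δ, 1, by positivity, one_pos, ?_⟩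
  intro a b g g' g'' hab hg hg' _ _ hga hgb hlt hconv _ x hx
  have hslope_ne : g' a ≠ 0 := by
    intro hzero
    have := quadratic_minorant_of_le_second_deriv hg hg' hconv (right_mem_Icc.2 hab.le)
    rw [hzero, hga, hgb] at this
    nlinarith [mul_pos hδ (pow_pos (sub_pos.2 hab) 2)]
  have hle : g x ≤ R := by
    rcases hx.1.eq_or_lt with rfl | hax
    · exact hga.le
    rcases hx.2.eq_or_lt with rfl | hxb
    · exact hgb.le
    exact (hlt x ⟨hax, hxb⟩).le
  have hdepth := sub_le_sq_div_of_le_second_deriv hδ hg hg' hconv hx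
  rw [hga] at hdepth
  rw [abs_of_nonneg (sub_nonneg.2 hle)]
  calc R - g x ≤ g' a ^ 2 / (2 * δ) := hdepth
    _ < 1 / δ * g' a ^ 2 := by
      rw [show g' a ^ 2 / (2 * δ) = 1 / δ * g' a ^ 2 / 2 by ring]
      linarith [show 0 < 1 / δ * g' a ^ 2 by positivity]

theorem stmt_7 (R δ L M : ℝ) (hR : 0 < R) (hδ : 0 < δ) (hL : 0 ≤ L) (hM : 0 ≤ M) :
    ∃ C ε : ℝ, 0 < C ∧ 0 < ε ∧
      ∀ (a b : ℝ) (g g' g'' : ℝ → ℝ), a < b →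
        (∀ x ∈ Set.Icc a b, HasDerivAt g (g' x) x) →
        (∀ x ∈ Set.Icc a b, HasDerivAt g' (g'' x) x) →
        LipschitzOnWith (Real.toNNReal L) g'' (Set.Icc a b) →
        (∀ x ∈ Set.Icc a b, |g x| ≤ M ∧ |g' x| ≤ M ∧ |g'' x| ≤ M) →
        g a = R → g b = R →
        (∀ x ∈ Set.Ioo a b, g x < R) →
        (∀ x ∈ Set.Ioo a b, δ ≤ g'' x) →
        |g' a| < ε →
        ∀ x ∈ Set.Icc a b, |R - g x| < C * (g' a) ^ 2 :=
  stmt_7_general R δ L M hδ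
end

section
/- A tetrahedron in ℝ³ has all four cone angles (sums of the three face angles at each vertex) equal to π if and only if opposite edges have equal lengths (i.e. it is isosceles/a disphenoid). -/
/-!
Unfold the three lateral faces of the tetrahedron `abcd` into the plane of the base `bcd`, giving
three copies `a₁, a₂, a₃` of the apex. The face angles at `b` are then consecutive angles of a fan
around `b` going from `a₁` to `a₃`, so cone angle `π` at `b` means that `b` is the midpoint of
`a₁a₃`; likewise `c` and `d` are the midpoints of `a₁a₂` and `a₂a₃`. Hence `bcd` is the medial
triangle of `a₁a₂a₃`, and each base edge is half a side of the big triangle, i.e. equal to the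
lateral edge opposite to it. Conversely, in an isosceles tetrahedron all four faces are congruent
(SSS), so the three face angles at a vertex are the three angles of the opposite face.
-/

open EuclideanGeometry Module Real
open scoped Congruent

theorem dist_midpoint_midpoint_left {V P : Type*} [NormedAddCommGroup V] [NormedSpace ℝ V]
    [MetricSpace P] [NormedAddTorsor V P] (p₁ p₂ p₃ : P) :
    dist (midpoint ℝ p₁ p₂) (midpoint ℝ p₁ p₃) = dist p₂ (midpoint ℝ p₂ p₃) := by
  rw [dist_left_midpoint, dist_eq_norm_vsub V, midpoint_vsub_midpoint, vsub_self, ← dist_zero_left,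
    dist_left_midpoint, dist_zero_left, dist_eq_norm_vsub V]

theorem dist_lt_dist_add_dist_of_not_collinear {V P : Type*} [NormedAddCommGroup V]
    [NormedSpace ℝ V] [StrictConvexSpace ℝ V] [MetricSpace P] [NormedAddTorsor V P] {a b c : P}
    (h : ¬Collinear ℝ {a, b, c}) : dist a c < dist a b + dist b c :=
  dist_lt_dist_add_dist_iff.2 fun hw => h hw.collinear

theorem AffineIndependent.not_collinear {k V P ι : Type*} [DivisionRing k] [AddCommGroup V]
    [Module k V] [AddTorsor V P] {p : ι → P} (h : AffineIndependent k p) {i j l : ι} (hij : i ≠ j)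
    (hil : i ≠ l) (hjl : j ≠ l) : ¬Collinear k {p i, p j, p l} := by
  rw [← affineIndependent_iff_not_collinear_set]
  have hinj : Function.Injective ![i, j, l] := by
    intro a b hab
    fin_cases a <;> fin_cases b <;> simp_all [eq_comm]
  have hcomp : ![p i, p j, p l] = p ∘ (⟨![i, j, l], hinj⟩ : Fin 3 ↪ ι) := by
    ext x
    fin_cases x <;> rfl
  exact hcomp ▸ h.comp_embedding _

namespace Orientation

variable {V : Type*} [NormedAddCommGroup V] [InnerProductSpace ℝ V] [Fact (finrank ℝ V = 2)]

theorem norm_smul_add_smul_rightAngleRotation_sq (o : Orientation ℝ V (Fin 2))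
    (x : V) (s t : ℝ) :
    ‖s • x + t • o.rightAngleRotation x‖ ^ 2 = (s ^ 2 + t ^ 2) * ‖x‖ ^ 2 := by
  rw [norm_add_sq_real, inner_smul_left, inner_smul_right, o.inner_rightAngleRotation_right,
    o.areaForm_apply_self, norm_smul, norm_smul, LinearIsometryEquiv.norm_map]
  simp only [Real.norm_eq_abs, mul_pow, sq_abs]
  ring

end Orientation

namespace EuclideanGeometry

section Plane

variable {V P : Type*} [NormedAddCommGroup V] [InnerProductSpace ℝ V] [MetricSpace P]
  [NormedAddTorsor V P] [Fact (finrank ℝ V = 2)] [Module.Oriented ℝ V (Fin 2)]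

theorem sbtw_of_angle_add_angle_add_angle_eq_pi {p a b c d : P} (hab : (∡ a p b).sign = 1)
    (hbc : (∡ b p c).sign = 1) (hcd : (∡ c p d).sign = 1)
    (h : ∠ a p b + ∠ b p c + ∠ c p d = π) : Sbtw ℝ a p d := by
  have ha := left_ne_of_oangle_sign_eq_one hab
  have hb := right_ne_of_oangle_sign_eq_one hab
  have hc := right_ne_of_oangle_sign_eq_one hbc
  have hd := right_ne_of_oangle_sign_eq_one hcd
  rw [← oangle_eq_pi_iff_sbtw, ← oangle_add ha hc hd, ← oangle_add ha hb hc,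
    oangle_eq_angle_of_sign_eq_one hab, oangle_eq_angle_of_sign_eq_one hbc,
    oangle_eq_angle_of_sign_eq_one hcd, ← Real.Angle.coe_add, ← Real.Angle.coe_add, h]

theorem midpoint_eq_of_angle_add_angle_add_angle_eq_pi {p a b c d : P}
    (hab : (∡ a p b).sign = 1) (hbc : (∡ b p c).sign = 1) (hcd : (∡ c p d).sign = 1)
    (h : ∠ a p b + ∠ b p c + ∠ c p d = π) (hdist : dist a p = dist d p) :
    midpoint ℝ a d = p := by
  have had := (sbtw_of_angle_add_angle_add_angle_eq_pi hab hbc hcd h).wbtw.dist_add_dist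
  rw [dist_comm d p] at hdist
  exact (eq_midpoint_of_dist_eq_half (by linarith) (by linarith)).symm

/-- `a₁, a₂, a₃` are the copies of the apex in a net of a tetrahedron with base `bcd`, its lateral
faces being folded out across `cb`, `dc` and `bd` respectively. -/
theorem dist_eq_of_net_angle_sums_eq_pi {b c d a₁ a₂ a₃ : P} (hbcd : (∡ c b d).sign = 1)
    (h₁ : (∡ b c a₁).sign = 1) (h₂ : (∡ c d a₂).sign = 1) (h₃ : (∡ d b a₃).sign = 1)
    (hb : ∠ a₁ b c + ∠ c b d + ∠ d b a₃ = π) (hc : ∠ a₂ c d + ∠ d c b + ∠ b c a₁ = π)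
    (hd : ∠ a₃ d b + ∠ b d c + ∠ c d a₂ = π)
    (hab : dist a₁ b = dist a₃ b) (hac : dist a₂ c = dist a₁ c) (had : dist a₃ d = dist a₂ d) :
    dist a₁ b = dist c d ∧ dist a₁ c = dist b d ∧ dist a₃ d = dist b c := by
  have hbdc := (oangle_rotate_sign c b d).trans hbcd
  have hdcb := (oangle_rotate_sign b d c).trans hbdc
  have mb := midpoint_eq_of_angle_add_angle_add_angle_eq_pi
    ((oangle_rotate_sign a₁ b c).symm.trans h₁) hbcd h₃ hb hab
  have mc := midpoint_eq_of_angle_add_angle_add_angle_eq_pi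
    ((oangle_rotate_sign a₂ c d).symm.trans h₂) hdcb h₁ hc hac
  have md := midpoint_eq_of_angle_add_angle_add_angle_eq_pi
    ((oangle_rotate_sign a₃ d b).symm.trans h₃) hbdc h₂ hd had
  subst mb mc md
  refine ⟨?_, ?_, ?_⟩
  · rw [midpoint_comm a₃, dist_midpoint_midpoint_left]
  · rw [midpoint_comm a₁ a₃, dist_midpoint_midpoint_left, midpoint_comm]
  · rw [midpoint_comm a₂ a₁, dist_midpoint_midpoint_left]

theorem exists_dist_eq_dist_eq_oangle_sign_eq_one {p q : P} {u v : ℝ} (h₁ : dist p q < u + v)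
    (h₂ : u < dist p q + v) (h₃ : v < dist p q + u) :
    ∃ r, dist r p = u ∧ dist r q = v ∧ (∡ q p r).sign = 1 := by
  have hdx : ‖q -ᵥ p‖ = dist p q := by rw [dist_comm, dist_eq_norm_vsub V]
  set x := q -ᵥ p
  set d := dist p q
  have hd : 0 < d := by linarith
  have hx : x ≠ 0 := norm_pos_iff.1 (hdx ▸ hd)
  have hu : 0 < u := by linarith
  have hv : 0 < v := by linarith
  -- `r` will be the point at distance `t` along `pq` and `s` to its left
  obtain ⟨t, ht⟩ : ∃ t, 2 * d * t = d ^ 2 + u ^ 2 - v ^ 2 :=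
    ⟨(d ^ 2 + u ^ 2 - v ^ 2) / (2 * d), by field_simp⟩
  have hts : 0 < u ^ 2 - t ^ 2 := by
    have heron : (2 * d) ^ 2 * (u ^ 2 - t ^ 2)
        = (u + v - d) * (v + d - u) * (d + u - v) * (d + u + v) := by
      linear_combination (-(2 * d * t + (d ^ 2 + u ^ 2 - v ^ 2))) * ht
    have hpos : 0 < (2 * d) ^ 2 * (u ^ 2 - t ^ 2) := heron ▸
      mul_pos (mul_pos (mul_pos (by linarith) (by linarith)) (by linarith)) (by linarith)
    exact (mul_pos_iff_of_pos_left (by positivity)).1 hpos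
  set s := √(u ^ 2 - t ^ 2)
  have hs : 0 < s := Real.sqrt_pos.2 hts
  have hs2 : s ^ 2 = u ^ 2 - t ^ 2 := Real.sq_sqrt hts.le
  refine ⟨((t / d) • x + (s / d) • o.rightAngleRotation x) +ᵥ p, ?_, ?_, ?_⟩
  · rw [dist_vadd_left, ← sq_eq_sq₀ (norm_nonneg _) hu.le,
      o.norm_smul_add_smul_rightAngleRotation_sq, hdx]
    field_simp
    linear_combination hs2
  · have : (((t / d) • x + (s / d) • o.rightAngleRotation x) +ᵥ p) -ᵥ q
        = ((t / d - 1) • x + (s / d) • o.rightAngleRotation x) := by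
      rw [vadd_vsub_assoc, sub_smul, one_smul, ← neg_vsub_eq_vsub_rev q p]
      abel
    rw [dist_eq_norm_vsub V, this, ← sq_eq_sq₀ (norm_nonneg _) hv.le,
      o.norm_smul_add_smul_rightAngleRotation_sq, hdx]
    field_simp
    linear_combination hs2 - ht
  · rw [EuclideanGeometry.oangle, vadd_vsub, o.oangle_sign_smul_add_right,
      o.oangle_sign_smul_right, ← o.rotation_pi_div_two, o.oangle_rotation_self_right hx,
      Real.Angle.sign_coe_pi_div_two, sign_pos (div_pos hs hd), one_mul]

theorem exists_congruent_oangle_sign_eq_one {V' P' : Type*} [NormedAddCommGroup V']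
    [InnerProductSpace ℝ V'] [MetricSpace P'] [NormedAddTorsor V' P'] {x y z : P'}
    (h : ¬Collinear ℝ {x, y, z}) {p q : P} (hpq : dist p q = dist x y) :
    ∃ r, (![x, y, z] ≅ ![p, q, r]) ∧ (∡ q p r).sign = 1 := by
  have hxzy : ¬Collinear ℝ {x, z, y} := by rwa [Set.pair_comm]
  have hyxz : ¬Collinear ℝ {y, x, z} := by rwa [Set.insert_comm]
  obtain ⟨r, hrp, hrq, hr⟩ := exists_dist_eq_dist_eq_oangle_sign_eq_one (V := V) (p := p) (q := q)
    (u := dist x z) (v := dist y z)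
    (by rw [hpq, dist_comm y z]; exact dist_lt_dist_add_dist_of_not_collinear hxzy)
    (by rw [hpq]; exact dist_lt_dist_add_dist_of_not_collinear h)
    (by rw [hpq, dist_comm x y]; exact dist_lt_dist_add_dist_of_not_collinear hyxz)
  refine ⟨r, side_side_side hpq.symm ?_ ?_, hr⟩
  · rw [dist_comm q, hrq]
  · rw [hrp, dist_comm]

end Plane

variable {V P : Type*} [NormedAddCommGroup V] [InnerProductSpace ℝ V] [MetricSpace P]
  [NormedAddTorsor V P]

theorem dist_eq_of_cone_angles_eq_pi {a b c d : P} (hbcd : ¬Collinear ℝ {b, c, d})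
    (hcba : ¬Collinear ℝ {c, b, a}) (hdca : ¬Collinear ℝ {d, c, a})
    (hbda : ¬Collinear ℝ {b, d, a}) (hb : ∠ a b c + ∠ a b d + ∠ c b d = π)
    (hc : ∠ a c b + ∠ a c d + ∠ b c d = π) (hd : ∠ a d b + ∠ a d c + ∠ b d c = π) :
    dist a b = dist c d ∧ dist a c = dist b d ∧ dist a d = dist b c := by
  let : Module.Oriented ℝ ℂ (Fin 2) := ⟨Complex.orientation⟩
  have : Fact (finrank ℝ ℂ = 2) := Complex.finrank_real_complex_fact
  obtain ⟨b', c', hbc⟩ : ∃ b' c' : ℂ, dist b' c' = dist b c :=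
    ⟨0, dist b c, by simp [Complex.dist_eq]⟩
  obtain ⟨d', f₀, s₀⟩ := exists_congruent_oangle_sign_eq_one hbcd hbc
  obtain ⟨a₁, f₁, s₁⟩ := exists_congruent_oangle_sign_eq_one hcba (p := c') (q := b')
    (by rw [dist_comm, hbc, dist_comm])
  obtain ⟨a₂, f₂, s₂⟩ := exists_congruent_oangle_sign_eq_one hdca (p := d') (q := c')
    (Congruent.dist_eq f₀ 2 1).symm
  obtain ⟨a₃, f₃, s₃⟩ := exists_congruent_oangle_sign_eq_one hbda (p := b') (q := d')
    (Congruent.dist_eq f₀ 0 2).symm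
  have hb' : ∠ a₁ b' c' + ∠ c' b' d' + ∠ d' b' a₃ = π := by
    have e₁ : ∠ a b c = ∠ a₁ b' c' := angle_eq_of_congruent f₁ 2 1 0
    have e₂ : ∠ c b d = ∠ c' b' d' := angle_eq_of_congruent f₀ 1 0 2
    have e₃ : ∠ d b a = ∠ d' b' a₃ := angle_eq_of_congruent f₃ 1 0 2
    linarith [angle_comm a b d]
  have hc' : ∠ a₂ c' d' + ∠ d' c' b' + ∠ b' c' a₁ = π := by
    have e₁ : ∠ a c d = ∠ a₂ c' d' := angle_eq_of_congruent f₂ 2 1 0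
    have e₂ : ∠ d c b = ∠ d' c' b' := angle_eq_of_congruent f₀ 2 1 0
    have e₃ : ∠ b c a = ∠ b' c' a₁ := angle_eq_of_congruent f₁ 1 0 2
    linarith [angle_comm a c b, angle_comm b c d]
  have hd' : ∠ a₃ d' b' + ∠ b' d' c' + ∠ c' d' a₂ = π := by
    have e₁ : ∠ a d b = ∠ a₃ d' b' := angle_eq_of_congruent f₃ 2 1 0
    have e₂ : ∠ b d c = ∠ b' d' c' := angle_eq_of_congruent f₀ 0 2 1
    have e₃ : ∠ c d a = ∠ c' d' a₂ := angle_eq_of_congruent f₂ 1 0 2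
    linarith [angle_comm a d c]
  obtain ⟨h₁, h₂, h₃⟩ := dist_eq_of_net_angle_sums_eq_pi s₀ s₁ s₂ s₃ hb' hc' hd'
    ((Congruent.dist_eq f₁ 2 1).symm.trans (Congruent.dist_eq f₃ 2 0))
    ((Congruent.dist_eq f₂ 2 1).symm.trans (Congruent.dist_eq f₁ 2 0))
    ((Congruent.dist_eq f₃ 2 1).symm.trans (Congruent.dist_eq f₂ 2 0))
  exact ⟨(Congruent.dist_eq f₁ 2 1).trans (h₁.trans (Congruent.dist_eq f₀ 1 2).symm),
    (Congruent.dist_eq f₁ 2 0).trans (h₂.trans (Congruent.dist_eq f₀ 0 2).symm),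
    (Congruent.dist_eq f₃ 2 1).trans (h₃.trans (Congruent.dist_eq f₀ 0 1).symm)⟩

theorem cone_angle_eq_pi_of_isosceles {a b c d : P} (hcd : c ≠ d) (h₁ : dist a b = dist c d)
    (h₂ : dist a c = dist b d) (h₃ : dist a d = dist b c) :
    ∠ b a c + ∠ b a d + ∠ c a d = π := by
  have e₁ : ∠ b a c = ∠ c d b := angle_eq_of_congruent
    (side_side_side (by rw [dist_comm, h₁]) (by rw [h₂, dist_comm]) (dist_comm c b)) 0 1 2
  have e₂ : ∠ b a d = ∠ d c b := angle_eq_of_congruent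
    (side_side_side (by rw [dist_comm, h₁, dist_comm]) (by rw [h₃, dist_comm]) (dist_comm d b))
    0 1 2
  have e₃ : ∠ c a d = ∠ d b c := angle_eq_of_congruent
    (side_side_side (by rw [dist_comm, h₂, dist_comm]) h₃ (dist_comm d c)) 0 1 2
  linarith [angle_add_angle_add_angle_eq_pi b hcd.symm, angle_comm b c d]

end EuclideanGeometry

theorem isosceles_of_finset_eq_univ {P : Type*} [PseudoMetricSpace P] {A : Fin 4 → P}
    (h₁ : dist (A 0) (A 1) = dist (A 2) (A 3)) (h₂ : dist (A 0) (A 2) = dist (A 1) (A 3))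
    (h₃ : dist (A 0) (A 3) = dist (A 1) (A 2)) {i j k l : Fin 4}
    (h : ({i, j, k, l} : Finset (Fin 4)) = Finset.univ) :
    dist (A i) (A j) = dist (A k) (A l) ∧ dist (A i) (A k) = dist (A j) (A l) ∧
      dist (A i) (A l) = dist (A j) (A k) := by
  fin_cases i <;> fin_cases j <;> fin_cases k <;> fin_cases l <;>
    first
    | exact absurd h (by decide)
    | grind [dist_comm]

/-- A tetrahedron has all four cone angles equal to `π` iff opposite edges have equal
lengths, i.e. it is isosceles (a disphenoid). -/
theorem stmt_14 (A : Fin 4 → EuclideanSpace ℝ (Fin 3)) (h : AffineIndependent ℝ A) :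
    (∀ i j k l : Fin 4, ({i, j, k, l} : Finset (Fin 4)) = Finset.univ →
      EuclideanGeometry.angle (A j) (A i) (A k) +
      EuclideanGeometry.angle (A j) (A i) (A l) +
      EuclideanGeometry.angle (A k) (A i) (A l) = Real.pi) ↔
    (dist (A 0) (A 1) = dist (A 2) (A 3) ∧
     dist (A 0) (A 2) = dist (A 1) (A 3) ∧
     dist (A 0) (A 3) = dist (A 1) (A 2)) := by
  constructor
  · intro hcone
    exact dist_eq_of_cone_angles_eq_pi (h.not_collinear (by decide) (by decide) (by decide))
      (h.not_collinear (by decide) (by decide) (by decide))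
      (h.not_collinear (by decide) (by decide) (by decide))
      (h.not_collinear (by decide) (by decide) (by decide))
      (hcone 1 0 2 3 (by decide)) (hcone 2 0 1 3 (by decide)) (hcone 3 0 1 2 (by decide))
  · rintro ⟨h₁, h₂, h₃⟩ i j k l hijkl
    have hkl : k ≠ l := by
      rintro rfl
      have := Finset.card_le_three (a := i) (b := j) (c := k)
      simp_all
    obtain ⟨e₁, e₂, e₃⟩ := isosceles_of_finset_eq_univ h₁ h₂ h₃ hijkl
    exact cone_angle_eq_pi_of_isosceles (h.injective.ne hkl) e₁ e₂ e₃
end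

section
/- For every acute triangle T in the plane, there exists a tetrahedron in ℝ³ all four of whose faces are congruent to T; moreover all four cone angles of this tetrahedron equal π. -/
/-!
Put the vertices at alternate corners `(x, y, z), (-x, -y, z), (-x, y, -z), (x, -y, -z)` of a
box. The half-turns about the coordinate axes permute them as the Klein four-group, so opposite
edges have equal lengths `2√(x² + y²)`, `2√(x² + z²)`, `2√(y² + z²)` and every face has these
three side lengths. Side lengths `a, b, c` are realised this way exactly when `b² + c² - a²`,
`a² + c² - b²`, `a² + b² - c²` are positive, i.e. when the triangle is acute. In a tetrahedron
with equal opposite edges the three face angles at a vertex are, by SSS, the three angles of the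
opposite face, so they add up to `π`.
-/

open EuclideanGeometry

theorem Fin.xor_eq_xor_of_insert_eq_univ {i j k l : Fin 4}
    (h : ({i, j, k, l} : Finset (Fin 4)) = Finset.univ) : i ^^^ j = k ^^^ l := by
  revert i j k l
  decide

theorem Fin.ne_of_insert_eq_univ {i j k l : Fin 4}
    (h : ({i, j, k, l} : Finset (Fin 4)) = Finset.univ) : j ≠ k := by
  revert i j k l
  decide

theorem Fin.exists_perm_xor_eq_of_insert_eq_univ {i j k l : Fin 4}
    (h : ({i, j, k, l} : Finset (Fin 4)) = Finset.univ) :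
    ∃ σ : Equiv.Perm (Fin 3), j ^^^ k = (σ 0).castSucc ^^^ (σ 1).castSucc ∧
      j ^^^ l = (σ 0).castSucc ^^^ (σ 2).castSucc ∧
      k ^^^ l = (σ 1).castSucc ^^^ (σ 2).castSucc := by
  revert i j k l
  decide

/-- With `^^^`, `Fin 4` is the Klein four-group, and `p ^^^ q` labels the pair of opposite edges
through `{p, q}`; so this says that opposite edges of `A` have equal lengths. -/
def IsDisphenoid {P : Type*} [MetricSpace P] (A : Fin 4 → P) : Prop :=
  ∀ p q : Fin 4, dist (A p) (A q) = dist (A 0) (A (p ^^^ q))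

namespace IsDisphenoid

section MetricSpace

variable {P : Type*} [MetricSpace P] {A : Fin 4 → P} {i j k l : Fin 4}

theorem dist_eq_of_xor_eq (hA : IsDisphenoid A) {p q r s : Fin 4} (h : p ^^^ q = r ^^^ s) :
    dist (A p) (A q) = dist (A r) (A s) := by
  rw [hA, h, ← hA]

theorem dist_eq_dist_of_insert_eq_univ (hA : IsDisphenoid A)
    (h : ({i, j, k, l} : Finset (Fin 4)) = Finset.univ) :
    dist (A i) (A j) = dist (A k) (A l) :=
  hA.dist_eq_of_xor_eq (Fin.xor_eq_xor_of_insert_eq_univ h)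

theorem exists_perm_face (hA : IsDisphenoid A)
    (h : ({i, j, k, l} : Finset (Fin 4)) = Finset.univ) :
    ∃ σ : Equiv.Perm (Fin 3),
      dist (A j) (A k) = dist (A (σ 0).castSucc) (A (σ 1).castSucc) ∧
      dist (A j) (A l) = dist (A (σ 0).castSucc) (A (σ 2).castSucc) ∧
      dist (A k) (A l) = dist (A (σ 1).castSucc) (A (σ 2).castSucc) := by
  obtain ⟨σ, hjk, hjl, hkl⟩ := Fin.exists_perm_xor_eq_of_insert_eq_univ h
  exact ⟨σ, hA.dist_eq_of_xor_eq hjk, hA.dist_eq_of_xor_eq hjl, hA.dist_eq_of_xor_eq hkl⟩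

end MetricSpace

variable {V P : Type*} [NormedAddCommGroup V] [InnerProductSpace ℝ V] [MetricSpace P]
  [NormedAddTorsor V P] {A : Fin 4 → P} {i j k l : Fin 4}

theorem angle_add_angle_add_angle_eq_pi (hA : IsDisphenoid A) (hinj : Function.Injective A)
    (h : ({i, j, k, l} : Finset (Fin 4)) = Finset.univ) :
    ∠ (A j) (A i) (A k) + ∠ (A j) (A i) (A l) + ∠ (A k) (A i) (A l) = Real.pi := by
  have hikjl : ({i, k, j, l} : Finset (Fin 4)) = Finset.univ := by
    rw [← h, Finset.insert_comm k j]
  have hiljk : ({i, l, j, k} : Finset (Fin 4)) = Finset.univ := by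
    rw [← h, Finset.insert_comm l j, Finset.pair_comm l k]
  have hij : dist (A j) (A i) = dist (A k) (A l) := by
    rw [dist_comm, hA.dist_eq_dist_of_insert_eq_univ h]
  have hik : dist (A i) (A k) = dist (A l) (A j) := by
    rw [dist_comm (A l), hA.dist_eq_dist_of_insert_eq_univ hikjl]
  have hil : dist (A i) (A l) = dist (A k) (A j) := by
    rw [dist_comm (A k), hA.dist_eq_dist_of_insert_eq_univ hiljk]
  have hjik : ∠ (A j) (A i) (A k) = ∠ (A k) (A l) (A j) :=
    angle_eq_of_congruent (side_side_side hij hik (dist_comm _ _)) 0 1 2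
  have hjil : ∠ (A j) (A i) (A l) = ∠ (A l) (A k) (A j) :=
    angle_eq_of_congruent (side_side_side (by rw [hij, dist_comm]) hil (dist_comm _ _)) 0 1 2
  have hkil : ∠ (A k) (A i) (A l) = ∠ (A l) (A j) (A k) :=
    angle_eq_of_congruent
      (side_side_side (by rw [dist_comm, hik, dist_comm]) (by rw [hil, dist_comm]) (dist_comm _ _))
      0 1 2
  rw [hjik, hjil, hkil, angle_comm (A l) (A k), add_comm (∠ (A k) (A l) (A j))]
  exact EuclideanGeometry.angle_add_angle_add_angle_eq_pi _
    (hinj.ne (Fin.ne_of_insert_eq_univ h).symm)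

end IsDisphenoid

def boxTetrahedron (x y z : ℝ) : Fin 4 → EuclideanSpace ℝ (Fin 3) :=
  ![!₂[x, y, z], !₂[-x, -y, z], !₂[-x, y, -z], !₂[x, -y, -z]]

theorem isDisphenoid_boxTetrahedron (x y z : ℝ) : IsDisphenoid (boxTetrahedron x y z) := by
  intro p q
  simp only [EuclideanSpace.dist_eq, Real.dist_eq, sq_abs, Fin.sum_univ_three]
  congr 1
  fin_cases p <;> fin_cases q <;>
    simp only [boxTetrahedron, Fin.reduceXor, Fin.reduceFinMk, Fin.zero_eta, Fin.mk_one,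
      Fin.isValue, Matrix.cons_val, Matrix.cons_val_zero, Matrix.cons_val_one] <;> ring

theorem dist_boxTetrahedron_zero_one (x y z : ℝ) :
    dist (boxTetrahedron x y z 0) (boxTetrahedron x y z 1) = √((2 * x) ^ 2 + (2 * y) ^ 2) := by
  simp only [EuclideanSpace.dist_eq, Real.dist_eq, sq_abs, Fin.sum_univ_three, boxTetrahedron,
    Fin.isValue, Matrix.cons_val, Matrix.cons_val_zero, Matrix.cons_val_one]
  ring_nf

theorem dist_boxTetrahedron_zero_two (x y z : ℝ) :
    dist (boxTetrahedron x y z 0) (boxTetrahedron x y z 2) = √((2 * x) ^ 2 + (2 * z) ^ 2) := by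
  simp only [EuclideanSpace.dist_eq, Real.dist_eq, sq_abs, Fin.sum_univ_three, boxTetrahedron,
    Fin.isValue, Matrix.cons_val, Matrix.cons_val_zero, Matrix.cons_val_one]
  ring_nf

theorem dist_boxTetrahedron_one_two (x y z : ℝ) :
    dist (boxTetrahedron x y z 1) (boxTetrahedron x y z 2) = √((2 * y) ^ 2 + (2 * z) ^ 2) := by
  simp only [EuclideanSpace.dist_eq, Real.dist_eq, sq_abs, Fin.sum_univ_three, boxTetrahedron,
    Fin.isValue, Matrix.cons_val, Matrix.cons_val_zero, Matrix.cons_val_one]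
  ring_nf

theorem affineIndependent_boxTetrahedron {x y z : ℝ} (hx : x ≠ 0) (hy : y ≠ 0) (hz : z ≠ 0) :
    AffineIndependent ℝ (boxTetrahedron x y z) := by
  rw [affineIndependent_iff_of_fintype]
  intro w hw hsum
  rw [Finset.weightedVSub_eq_linear_combination _ hw] at hsum
  have h0 := congrArg (· 0) hsum
  have h1 := congrArg (· 1) hsum
  have h2 := congrArg (· 2) hsum
  simp only [Fin.sum_univ_four, Fin.isValue, boxTetrahedron, Matrix.cons_val_zero,
    Matrix.cons_val_one, Matrix.cons_val, PiLp.add_apply, PiLp.smul_apply, smul_eq_mul, mul_neg,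
    PiLp.zero_apply] at hw h0 h1 h2
  have hx' : w 0 - w 1 - w 2 + w 3 = 0 := mul_right_cancel₀ hx (by linear_combination h0)
  have hy' : w 0 - w 1 + w 2 - w 3 = 0 := mul_right_cancel₀ hy (by linear_combination h1)
  have hz' : w 0 + w 1 - w 2 - w 3 = 0 := mul_right_cancel₀ hz (by linear_combination h2)
  intro i
  fin_cases i <;> simp only [Fin.zero_eta, Fin.mk_one, Fin.reduceFinMk, Fin.isValue] <;>
    linarith

theorem exists_boxTetrahedron_dist_eq {a b c : ℝ} (ha : 0 ≤ a) (hb : 0 ≤ b) (hc : 0 ≤ c)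
    (hbc : a ^ 2 < b ^ 2 + c ^ 2) (hac : b ^ 2 < a ^ 2 + c ^ 2) (hab : c ^ 2 < a ^ 2 + b ^ 2) :
    ∃ x y z : ℝ, x ≠ 0 ∧ y ≠ 0 ∧ z ≠ 0 ∧
      dist (boxTetrahedron x y z 0) (boxTetrahedron x y z 1) = c ∧
      dist (boxTetrahedron x y z 0) (boxTetrahedron x y z 2) = b ∧
      dist (boxTetrahedron x y z 1) (boxTetrahedron x y z 2) = a := by
  have two_mul_sqrt_sq {s : ℝ} (hs : 0 < s) : (2 * √(s / 8)) ^ 2 = s / 2 := by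
    rw [mul_pow, Real.sq_sqrt (by positivity)]
    ring
  have sqrt_ne {s : ℝ} (hs : 0 < s) : √(s / 8) ≠ 0 := (Real.sqrt_pos.2 (by positivity)).ne'
  have hx : 0 < b ^ 2 + c ^ 2 - a ^ 2 := by linarith
  have hy : 0 < a ^ 2 + c ^ 2 - b ^ 2 := by linarith
  have hz : 0 < a ^ 2 + b ^ 2 - c ^ 2 := by linarith
  refine ⟨_, _, _, sqrt_ne hx, sqrt_ne hy, sqrt_ne hz, ?_, ?_, ?_⟩
  · rw [dist_boxTetrahedron_zero_one, two_mul_sqrt_sq hx, two_mul_sqrt_sq hy]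
    convert Real.sqrt_sq hc using 2
    ring
  · rw [dist_boxTetrahedron_zero_two, two_mul_sqrt_sq hx, two_mul_sqrt_sq hz]
    convert Real.sqrt_sq hb using 2
    ring
  · rw [dist_boxTetrahedron_one_two, two_mul_sqrt_sq hy, two_mul_sqrt_sq hz]
    convert Real.sqrt_sq ha using 2
    ring

theorem EuclideanGeometry.dist_sq_lt_dist_sq_add_dist_sq_of_angle_lt_pi_div_two
    {V P : Type*} [NormedAddCommGroup V] [InnerProductSpace ℝ V] [MetricSpace P]
    [NormedAddTorsor V P] {p₁ p₂ p₃ : P} (h : ∠ p₁ p₂ p₃ < Real.pi / 2) :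
    dist p₁ p₃ ^ 2 < dist p₁ p₂ ^ 2 + dist p₃ p₂ ^ 2 := by
  have h₁ : 0 < dist p₁ p₂ := dist_pos.mpr (by rintro rfl; simp at h)
  have h₃ : 0 < dist p₃ p₂ := dist_pos.mpr (by rintro rfl; simp at h)
  have hcos : 0 < Real.cos (∠ p₁ p₂ p₃) :=
    Real.cos_pos_of_mem_Ioo ⟨by linarith [angle_nonneg p₁ p₂ p₃, Real.pi_pos], h⟩
  have := law_cos p₁ p₂ p₃
  nlinarith [mul_pos (mul_pos h₁ h₃) hcos]

theorem stmt_15_general (t : Fin 3 → EuclideanSpace ℝ (Fin 2))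
    (hacute : EuclideanGeometry.angle (t 1) (t 0) (t 2) < Real.pi / 2 ∧
              EuclideanGeometry.angle (t 0) (t 1) (t 2) < Real.pi / 2 ∧
              EuclideanGeometry.angle (t 0) (t 2) (t 1) < Real.pi / 2) :
    ∃ A : Fin 4 → EuclideanSpace ℝ (Fin 3), AffineIndependent ℝ A ∧
      (∀ i j k l : Fin 4, ({i, j, k, l} : Finset (Fin 4)) = Finset.univ →
        ∃ σ : Equiv.Perm (Fin 3),
          dist (A j) (A k) = dist (t (σ 0)) (t (σ 1)) ∧
          dist (A j) (A l) = dist (t (σ 0)) (t (σ 2)) ∧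
          dist (A k) (A l) = dist (t (σ 1)) (t (σ 2))) ∧
      (∀ i j k l : Fin 4, ({i, j, k, l} : Finset (Fin 4)) = Finset.univ →
        EuclideanGeometry.angle (A j) (A i) (A k) +
        EuclideanGeometry.angle (A j) (A i) (A l) +
        EuclideanGeometry.angle (A k) (A i) (A l) = Real.pi) := by
  obtain ⟨h₀, h₁, h₂⟩ := hacute
  replace h₀ := dist_sq_lt_dist_sq_add_dist_sq_of_angle_lt_pi_div_two h₀
  replace h₁ := dist_sq_lt_dist_sq_add_dist_sq_of_angle_lt_pi_div_two h₁
  replace h₂ := dist_sq_lt_dist_sq_add_dist_sq_of_angle_lt_pi_div_two h₂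
  rw [dist_comm (t 1) (t 0), dist_comm (t 2) (t 0)] at h₀
  rw [dist_comm (t 2) (t 1)] at h₁
  obtain ⟨x, y, z, hx, hy, hz, d₀₁, d₀₂, d₁₂⟩ :=
    exists_boxTetrahedron_dist_eq (a := dist (t 1) (t 2)) (b := dist (t 0) (t 2))
      (c := dist (t 0) (t 1)) dist_nonneg dist_nonneg dist_nonneg
      (by linarith) (by linarith) (by linarith)
  set A := boxTetrahedron x y z
  have hface (m n : Fin 3) : dist (A m.castSucc) (A n.castSucc) = dist (t m) (t n) := by
    fin_cases m <;> fin_cases n <;>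
      simp [d₀₁, d₀₂, d₁₂, dist_comm (A 1) (A 0), dist_comm (A 2) (A 0), dist_comm (A 2) (A 1),
        dist_comm (t 1) (t 0), dist_comm (t 2) (t 0), dist_comm (t 2) (t 1)]
  have hA := isDisphenoid_boxTetrahedron x y z
  have hind := affineIndependent_boxTetrahedron hx hy hz
  refine ⟨A, hind, fun i j k l h => ?_, fun i j k l h =>
    hA.angle_add_angle_add_angle_eq_pi hind.injective h⟩
  obtain ⟨σ, hjk, hjl, hkl⟩ := hA.exists_perm_face h
  exact ⟨σ, by rw [hjk, hface], by rw [hjl, hface], by rw [hkl, hface]⟩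

/-- For every acute triangle `t` in the plane there exists a tetrahedron all four of whose
faces are congruent to `t`; all four cone angles of this tetrahedron equal `π`. -/
theorem stmt_15 (t : Fin 3 → EuclideanSpace ℝ (Fin 2)) (ht : AffineIndependent ℝ t)
    (hacute : EuclideanGeometry.angle (t 1) (t 0) (t 2) < Real.pi / 2 ∧
              EuclideanGeometry.angle (t 0) (t 1) (t 2) < Real.pi / 2 ∧
              EuclideanGeometry.angle (t 0) (t 2) (t 1) < Real.pi / 2) :
    ∃ A : Fin 4 → EuclideanSpace ℝ (Fin 3), AffineIndependent ℝ A ∧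
      (∀ i j k l : Fin 4, ({i, j, k, l} : Finset (Fin 4)) = Finset.univ →
        ∃ σ : Equiv.Perm (Fin 3),
          dist (A j) (A k) = dist (t (σ 0)) (t (σ 1)) ∧
          dist (A j) (A l) = dist (t (σ 0)) (t (σ 2)) ∧
          dist (A k) (A l) = dist (t (σ 1)) (t (σ 2))) ∧
      (∀ i j k l : Fin 4, ({i, j, k, l} : Finset (Fin 4)) = Finset.univ →
        EuclideanGeometry.angle (A j) (A i) (A k) +
        EuclideanGeometry.angle (A j) (A i) (A l) +
        EuclideanGeometry.angle (A k) (A i) (A l) = Real.pi) :=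
  stmt_15_general t hacute
end
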